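/- arXiv:2403.03990 — 2 statements merged into one kernel-verified Lean document; each statement's English description precedes it below -/
import Mathlib

section
/- In the full Sierpinski tree on 3^k nodes, the set of descendants of the root C = (3^k − 1)/2 (including C itself) is exactly all 3^k nodes, and for each node j, the descendant set of j is a contiguous interval of indices containing j. -/
/-- "Left" point: midpoint of the first third of `[S, E]`. -/
def sL (S E : ℕ) : ℕ := S + ((E - S + 1) / 3 - 1) / 2

/-- "Center" point: midpoint of `[S, E]`. -/
def sC (S E : ℕ) : ℕ := (S + E) / 2

/-- "Right" point: midpoint of the final third of `[S, E]`. -/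
def sR (S E : ℕ) : ℕ := E - (sL S E - S)

/-- Offset `T = 2(L - S)` used to split `[S,E]` into thirds. -/
def sT (S E : ℕ) : ℕ := 2 * (sL S E - S)

/-- `SEdge S E p c` : the recursive construction `sierpinski(S, E)` produces
the directed edge from parent `p` to child `c`. -/
inductive SEdge : ℕ → ℕ → ℕ → ℕ → Prop where
  | cl (S E : ℕ) : S ≠ E → SEdge S E (sC S E) (sL S E)
  | cr (S E : ℕ) : S ≠ E → SEdge S E (sC S E) (sR S E)
  | recL (S E p c : ℕ) : S ≠ E → SEdge S (S + sT S E) p c → SEdge S E p c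
  | recC (S E p c : ℕ) : S ≠ E →
      SEdge (S + sT S E + 1) (S + 2 * sT S E + 1) p c → SEdge S E p c
  | recR (S E p c : ℕ) : S ≠ E → SEdge (S + 2 * sT S E + 2) E p c → SEdge S E p c

/-- Edges of the full Sierpinski tree on `3 ^ k` nodes. -/
def fullEdge (k : ℕ) (p c : ℕ) : Prop := SEdge 0 (3 ^ k - 1) p c

/-- Reachability (descendant relation, reflexive) in the full tree on `3 ^ k` nodes. -/
def reaches (k : ℕ) (a b : ℕ) : Prop := Relation.ReflTransGen (fullEdge k) a b

/-- The update set `B(j)` : `j` together with all of its ancestors. -/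
def updSet (k j : ℕ) : Set ℕ := {m | reaches k m j}

/-- The prefix-sum query set `P(j)` : nodes `m` whose descendant interval is
contained in `[0, j]`, but whose parent's descendant interval is not. -/
def qrySet (k j : ℕ) : Set ℕ :=
  {m | m < 3 ^ k ∧ (∀ i, reaches k m i → i ≤ j) ∧
    ∀ p, fullEdge k p m → ¬ (∀ i, reaches k p i → i ≤ j)}


/-!
Split the block `[S, S + 3^(n+1))` into three blocks of length `3^n`. The tree on the big block
is the three trees on the thirds plus the two edges from the centre of the middle third to the
centres of the outer thirds. By induction on `n`, a block's centre is never a child, so no path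
leaves a third except through the big centre, and the centre reaches its whole block. Hence the
descendants of a node are the block of which it is the centre.
-/

namespace Sierpinski

theorem sEdge_iff {S E p c : ℕ} :
    SEdge S E p c ↔ S ≠ E ∧
      (p = sC S E ∧ (c = sL S E ∨ c = sR S E) ∨ SEdge S (S + sT S E) p c ∨
        SEdge (S + sT S E + 1) (S + 2 * sT S E + 1) p c ∨
        SEdge (S + 2 * sT S E + 2) E p c) := by
  constructor
  · rintro (⟨_, _, h⟩ | ⟨_, _, h⟩ | ⟨_, _, _, _, h, h'⟩ | ⟨_, _, _, _, h, h'⟩ |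
      ⟨_, _, _, _, h, h'⟩) <;> simp_all
  · rintro ⟨hne, ⟨rfl, rfl | rfl⟩ | h | h | h⟩
    exacts [.cl S E hne, .cr S E hne, .recL S E p c hne h, .recC S E p c hne h,
      .recR S E p c hne h]

theorem three_pow_mod_two (n : ℕ) : 3 ^ n % 2 = 1 := by
  simp [Nat.pow_mod]

def blockEdge (S n p c : ℕ) : Prop := SEdge S (S + 3 ^ n - 1) p c

def blockReach (S n : ℕ) : ℕ → ℕ → Prop := Relation.ReflTransGen (blockEdge S n)

def blockCenter (S n : ℕ) : ℕ := S + 3 ^ n / 2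

theorem blockCenter_mem (S n : ℕ) : S ≤ blockCenter S n ∧ blockCenter S n < S + 3 ^ n := by
  have : 0 < 3 ^ n := by positivity
  unfold blockCenter; omega

theorem blockCenter_succ (S n : ℕ) : blockCenter S (n + 1) = blockCenter (S + 3 ^ n) n := by
  have := three_pow_mod_two n
  unfold blockCenter; rw [pow_succ]; omega

theorem not_blockEdge_zero (S p c : ℕ) : ¬ blockEdge S 0 p c :=
  fun h ↦ (sEdge_iff.mp h).1 (by simp)

theorem sL_sC_sR_sT_block (S n : ℕ) :
    sL S (S + 3 ^ (n + 1) - 1) = blockCenter S n ∧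
      sC S (S + 3 ^ (n + 1) - 1) = blockCenter S (n + 1) ∧
      sR S (S + 3 ^ (n + 1) - 1) = blockCenter (S + 2 * 3 ^ n) n ∧
      sT S (S + 3 ^ (n + 1) - 1) = 3 ^ n - 1 := by
  have := three_pow_mod_two n
  refine ⟨?_, ?_, ?_, ?_⟩ <;> simp only [sL, sC, sR, sT, blockCenter, pow_succ'] <;> omega

theorem blockEdge_succ_iff {S n p c : ℕ} :
    blockEdge S (n + 1) p c ↔
      p = blockCenter S (n + 1) ∧ (c = blockCenter S n ∨ c = blockCenter (S + 2 * 3 ^ n) n) ∨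
      ∃ t < 3, blockEdge (S + t * 3 ^ n) n p c := by
  obtain ⟨hL, hC, hR, hT⟩ := sL_sC_sR_sT_block S n
  have h3 : 3 ^ (n + 1) = 3 * 3 ^ n := pow_succ' 3 n
  have hpos : 0 < 3 ^ n := by positivity
  have hne : S ≠ S + 3 ^ (n + 1) - 1 := by omega
  unfold blockEdge
  rw [sEdge_iff, hL, hC, hR, hT]
  simp only [ne_eq, hne, not_false_eq_true, true_and]
  have congr {S E S' E' : ℕ} (hS : S = S') (hE : E = E') :
      SEdge S E p c ↔ SEdge S' E' p c := by rw [hS, hE]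
  rw [congr (E := S + (3 ^ n - 1)) (S' := S + 0 * 3 ^ n) (E' := S + 0 * 3 ^ n + 3 ^ n - 1)
      (by omega) (by omega),
    congr (S := S + (3 ^ n - 1) + 1) (E := S + 2 * (3 ^ n - 1) + 1) (S' := S + 1 * 3 ^ n)
      (E' := S + 1 * 3 ^ n + 3 ^ n - 1) (by omega) (by omega),
    congr (S := S + 2 * (3 ^ n - 1) + 2) (E := S + 3 ^ (n + 1) - 1) (S' := S + 2 * 3 ^ n)
      (E' := S + 2 * 3 ^ n + 3 ^ n - 1) (by omega) (by omega)]
  constructor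
  · rintro (h | h | h | h)
    exacts [.inl h, .inr ⟨0, by norm_num, h⟩, .inr ⟨1, by norm_num, h⟩, .inr ⟨2, by norm_num, h⟩]
  · rintro (h | ⟨t, ht, h⟩)
    · exact .inl h
    · interval_cases t <;> tauto

theorem eq_of_mem_block {S N t t' x : ℕ} (hx : S + t * N ≤ x ∧ x < S + t * N + N)
    (hx' : S + t' * N ≤ x ∧ x < S + t' * N + N) : t = t' := by
  have key {u : ℕ} (hu : S + u * N ≤ x ∧ x < S + u * N + N) : (x - S) / N = u :=
    Nat.div_eq_of_lt_le (by omega) (by rw [Nat.succ_mul]; omega)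
  rw [← key hx, key hx']

theorem exists_mem_subblock {S N j : ℕ} (hSj : S ≤ j) (hj : j < S + 3 * N) :
    ∃ t < 3, S + t * N ≤ j ∧ j < S + t * N + N := by
  by_cases h0 : j < S + N
  · exact ⟨0, by norm_num, by omega⟩
  by_cases h1 : j < S + 2 * N
  · exact ⟨1, by norm_num, by omega⟩
  · exact ⟨2, by norm_num, by omega⟩

theorem blockEdge_bounds {n S p c : ℕ} (h : blockEdge S n p c) :
    S ≤ p ∧ p < S + 3 ^ n ∧ S ≤ c ∧ c < S + 3 ^ n := by
  induction n generalizing S with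
  | zero => exact absurd h (not_blockEdge_zero S p c)
  | succ n ih =>
    have h3 : 3 ^ (n + 1) = 3 * 3 ^ n := pow_succ' 3 n
    rcases blockEdge_succ_iff.mp h with ⟨rfl, rfl | rfl⟩ | ⟨t, ht, h⟩
    · have := blockCenter_mem S (n + 1); have := blockCenter_mem S n; omega
    · have := blockCenter_mem S (n + 1); have := blockCenter_mem (S + 2 * 3 ^ n) n; omega
    · have := ih h
      interval_cases t <;> omega

theorem blockEdge_ne_blockCenter {n S p c : ℕ} (h : blockEdge S n p c) : c ≠ blockCenter S n := by
  induction n generalizing S with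
  | zero => exact absurd h (not_blockEdge_zero S p c)
  | succ n ih =>
    have : 0 < 3 ^ n := by positivity
    rw [blockCenter_succ]
    rcases blockEdge_succ_iff.mp h with ⟨-, rfl | rfl⟩ | ⟨t, ht, h⟩
    · unfold blockCenter; omega
    · unfold blockCenter; omega
    · have := blockEdge_bounds h
      have := blockCenter_mem (S + 3 ^ n) n
      interval_cases t
      · omega
      · simpa using ih h
      · omega

theorem blockReach_bounds {n S x y : ℕ} (h : blockReach S n x y) (hx : S ≤ x ∧ x < S + 3 ^ n) :
    S ≤ y ∧ y < S + 3 ^ n := by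
  induction h with
  | refl => exact hx
  | tail _ e _ => have := blockEdge_bounds e; omega

theorem eq_of_blockReach_blockCenter {n S x : ℕ} (h : blockReach S n x (blockCenter S n)) :
    x = blockCenter S n := by
  rcases Relation.ReflTransGen.cases_tail h with h | ⟨_, -, e⟩
  exacts [h.symm, absurd rfl (blockEdge_ne_blockCenter e)]

theorem blockReach_succ_of_blockReach {n S t x y : ℕ} (ht : t < 3)
    (h : blockReach (S + t * 3 ^ n) n x y) : blockReach S (n + 1) x y :=
  Relation.ReflTransGen.mono (r := blockEdge (S + t * 3 ^ n) n)
    (fun _ _ e ↦ blockEdge_succ_iff.mpr (.inr ⟨t, ht, e⟩)) _ _ h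

/-- Only the centre of a block has edges leaving its third, and it is reachable from no other
node. -/
theorem blockReach_of_blockReach_succ {n S t j i : ℕ}
    (hj : S + t * 3 ^ n ≤ j ∧ j < S + t * 3 ^ n + 3 ^ n) (hjC : j ≠ blockCenter S (n + 1))
    (h : blockReach S (n + 1) j i) : blockReach (S + t * 3 ^ n) n j i := by
  induction h with
  | refl => exact .refl
  | @tail x y hjx e ih =>
    have hxC : x ≠ blockCenter S (n + 1) := by
      rintro rfl
      exact hjC (eq_of_blockReach_blockCenter hjx)
    rcases blockEdge_succ_iff.mp e with ⟨hx, -⟩ | ⟨t', -, e⟩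
    · exact absurd hx hxC
    · have ht : t' = t := eq_of_mem_block ⟨(blockEdge_bounds e).1, (blockEdge_bounds e).2.1⟩
        (blockReach_bounds ih hj)
      exact ih.tail (ht ▸ e)

theorem blockReach_blockCenter_iff {n S i : ℕ} :
    blockReach S n (blockCenter S n) i ↔ S ≤ i ∧ i < S + 3 ^ n := by
  refine ⟨fun h ↦ blockReach_bounds h (blockCenter_mem S n), fun hi ↦ ?_⟩
  induction n generalizing S with
  | zero =>
    obtain rfl : i = blockCenter S 0 := by simp only [blockCenter]; simp at hi; omega
    exact .refl
  | succ n ih =>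
    obtain ⟨t, ht, hit⟩ := exists_mem_subblock hi.1 (pow_succ' 3 n ▸ hi.2)
    have hroot : blockReach S (n + 1) (blockCenter S (n + 1)) (blockCenter (S + t * 3 ^ n) n) := by
      interval_cases t
      · exact .single (blockEdge_succ_iff.mpr (.inl ⟨rfl, .inl (by simp)⟩))
      · rw [blockCenter_succ, one_mul]; exact .refl
      · exact .single (blockEdge_succ_iff.mpr (.inl ⟨rfl, .inr rfl⟩))
    exact hroot.trans (blockReach_succ_of_blockReach ht (ih hit))

theorem exists_blockReach_iff_interval {n S j : ℕ} (hSj : S ≤ j) (hj : j < S + 3 ^ n) :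
    ∃ a b, a ≤ j ∧ j ≤ b ∧ ∀ i, blockReach S n j i ↔ a ≤ i ∧ i ≤ b := by
  have center (S n : ℕ) : ∃ a b, a ≤ blockCenter S n ∧ blockCenter S n ≤ b ∧
      ∀ i, blockReach S n (blockCenter S n) i ↔ a ≤ i ∧ i ≤ b := by
    have := blockCenter_mem S n
    exact ⟨S, S + 3 ^ n - 1, this.1, by omega, fun i ↦ by rw [blockReach_blockCenter_iff]; omega⟩
  induction n generalizing S j with
  | zero =>
    have hjS : j = blockCenter S 0 := by simp only [blockCenter]; simp at hj; omega
    exact hjS ▸ center S 0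
  | succ n ih =>
    by_cases hjC : j = blockCenter S (n + 1)
    · exact hjC ▸ center S (n + 1)
    obtain ⟨t, ht, hjt⟩ := exists_mem_subblock hSj (pow_succ' 3 n ▸ hj)
    obtain ⟨a, b, haj, hjb, hab⟩ := ih hjt.1 hjt.2
    refine ⟨a, b, haj, hjb, fun i ↦ ?_⟩
    rw [← hab]
    exact ⟨blockReach_of_blockReach_succ hjt hjC, blockReach_succ_of_blockReach ht⟩

theorem reaches_eq_blockReach (k : ℕ) : reaches k = blockReach 0 k := by
  have : fullEdge k = blockEdge 0 k := by
    funext p c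
    simp only [fullEdge, blockEdge, zero_add]
  unfold reaches blockReach
  rw [this]

end Sierpinski

/-- in the full Sierpinski tree on `3 ^ k` nodes, the descendants
of the root `C = (3 ^ k - 1) / 2` (including `C`) are exactly all `3 ^ k`
nodes, and every node's descendant set is a contiguous interval of indices
containing that node. -/
theorem sierpinski_descendant_intervals (k : ℕ) :
    (∀ i, reaches k ((3 ^ k - 1) / 2) i ↔ i < 3 ^ k) ∧
    (∀ j < 3 ^ k, ∃ a b, a ≤ j ∧ j ≤ b ∧
      ∀ i, reaches k j i ↔ a ≤ i ∧ i ≤ b) := by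
  have hroot : (3 ^ k - 1) / 2 = Sierpinski.blockCenter 0 k := by
    have := Sierpinski.three_pow_mod_two k
    unfold Sierpinski.blockCenter
    generalize 3 ^ k = x at *
    omega
  rw [Sierpinski.reaches_eq_blockReach, hroot]
  refine ⟨fun i ↦ ?_, fun j hj ↦ ?_⟩
  · rw [Sierpinski.blockReach_blockCenter_iff]
    omega
  · exact Sierpinski.exists_blockReach_iff_interval (Nat.zero_le j) (by omega)
end

section
/- The weight w_N(j) is an increasing function of N: if 0 ≤ j < N ≤ M, then w_N(j) ≤ w_M(j). -/
/-- Edges of the Sierpinski forest on `N` nodes: build the full tree on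
`3 ^ ⌈log₃ N⌉` nodes and delete every node with index `≥ N`. -/
def genEdge (N : ℕ) (p c : ℕ) : Prop :=
  fullEdge (Nat.clog 3 N) p c ∧ p < N ∧ c < N

/-- Reachability (descendant relation) in the Sierpinski forest on `N` nodes. -/
def genReaches (N : ℕ) (a b : ℕ) : Prop := Relation.ReflTransGen (genEdge N) a b

/-- The update set `B_N(j)` : `j` together with all of its ancestors. -/
def genUpd (N j : ℕ) : Set ℕ := {m | genReaches N m j}

/-- The prefix-sum query set `P_N(j)`. -/
def genQry (N j : ℕ) : Set ℕ :=
  {m | m < N ∧ (∀ i, genReaches N m i → i ≤ j) ∧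
    ∀ p, genEdge N p m → ¬ (∀ i, genReaches N p i → i ≤ j)}

/-- The weight `w_N(j) = |B_N(j) ∪ P_N(j)|`. -/
noncomputable def weight (N j : ℕ) : ℕ := (genUpd N j ∪ genQry N j).ncard

def centerOffset : ℕ → ℕ
  | 0 => 0
  | a + 1 => 3 * centerOffset a + 1

def blockCenter (a i : ℕ) : ℕ := 3 ^ a * (i / 3 ^ a) + centerOffset a

theorem two_mul_centerOffset_add_one (a : ℕ) : 2 * centerOffset a + 1 = 3 ^ a := by
  induction a with
  | zero => rfl
  | succ a ih => rw [centerOffset, pow_succ]; omega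

theorem centerOffset_lt (a : ℕ) : centerOffset a < 3 ^ a := by
  have := two_mul_centerOffset_add_one a; omega

theorem centerOffset_succ (a : ℕ) : centerOffset (a + 1) = 3 ^ a + centerOffset a := by
  have := two_mul_centerOffset_add_one a; rw [centerOffset]; omega

theorem centerOffset_add (a d : ℕ) :
    centerOffset (a + d) = 3 ^ a * centerOffset d + centerOffset a := by
  induction d with
  | zero => simp [centerOffset]
  | succ d ih => rw [← add_assoc, centerOffset_succ, ih, centerOffset_succ, pow_add]; ring

theorem blockCenter_zero (i : ℕ) : blockCenter 0 i = i := by simp [blockCenter, centerOffset]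

theorem blockCenter_mul_add (a k : ℕ) {r : ℕ} (hr : r < 3 ^ a) :
    blockCenter a (3 ^ a * k + r) = 3 ^ a * k + centerOffset a := by
  rw [blockCenter, Nat.mul_add_div (by positivity), Nat.div_eq_of_lt hr, add_zero]

theorem blockCenter_of_dvd {a B i : ℕ} (hB : 3 ^ a ∣ B) (hBi : B ≤ i) (hiB : i < B + 3 ^ a) :
    blockCenter a i = B + centerOffset a := by
  obtain ⟨k, rfl⟩ := hB
  have := blockCenter_mul_add a k (r := i - 3 ^ a * k) (by omega)
  rwa [Nat.add_sub_cancel' hBi] at this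

theorem blockCenter_div (a i : ℕ) : blockCenter a i / 3 ^ a = i / 3 ^ a := by
  rw [blockCenter, Nat.mul_add_div (by positivity), Nat.div_eq_of_lt (centerOffset_lt a), add_zero]

theorem blockCenter_mono (a : ℕ) : Monotone (blockCenter a) := fun _ _ h =>
  Nat.add_le_add_right (Nat.mul_le_mul_left _ (Nat.div_le_div_right h)) _

theorem blockCenter_congr {a i j : ℕ} (h : i / 3 ^ a = j / 3 ^ a) :
    blockCenter a i = blockCenter a j := by
  rw [blockCenter, h, blockCenter]

theorem blockCenter_blockCenter_of_le {a b : ℕ} (hab : a ≤ b) (i : ℕ) :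
    blockCenter b (blockCenter a i) = blockCenter b i := by
  obtain ⟨d, rfl⟩ := Nat.exists_eq_add_of_le hab
  apply blockCenter_congr
  rw [pow_add, ← Nat.div_div_eq_div_mul, ← Nat.div_div_eq_div_mul, blockCenter_div]

theorem blockCenter_blockCenter_of_ge {a b : ℕ} (hba : b ≤ a) (i : ℕ) :
    blockCenter b (blockCenter a i) = blockCenter a i := by
  obtain ⟨d, rfl⟩ := Nat.exists_eq_add_of_le hba
  have hsplit : blockCenter (b + d) i = 3 ^ b * (3 ^ d * (i / 3 ^ (b + d)) + centerOffset d)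
      + centerOffset b := by
    rw [blockCenter, centerOffset_add, pow_add]; ring
  rw [hsplit, blockCenter_mul_add _ _ (centerOffset_lt b)]

theorem pow_le_blockCenter {K a : ℕ} (h : K < a) (i : ℕ) : 3 ^ K ≤ blockCenter a i := by
  obtain ⟨a, rfl⟩ := Nat.exists_eq_add_of_lt h
  calc 3 ^ K ≤ 3 ^ (K + a) := Nat.pow_le_pow_right (by norm_num) (Nat.le_add_right K a)
    _ ≤ centerOffset (K + a + 1) := by rw [centerOffset_succ]; omega
    _ ≤ blockCenter (K + a + 1) i := Nat.le_add_left _ _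

theorem blockCenter_eq_of_le_of_le {a i j : ℕ} (hij : blockCenter a i ≤ j) (hji : j ≤ i) :
    blockCenter a j = blockCenter a i := by
  refine blockCenter_congr (le_antisymm (Nat.div_le_div_right hji) ?_)
  rw [Nat.le_div_iff_mul_le (by positivity), mul_comm]
  exact (Nat.le_add_right _ _).trans hij

/-- The parent relation of the infinite Sierpinski tree on `ℕ`. -/
def SierpinskiEdge (p c : ℕ) : Prop :=
  p ≠ c ∧ ∃ a, blockCenter a c = c ∧ blockCenter (a + 1) c = p

theorem sEdge_iff {S E p c : ℕ} :
    SEdge S E p c ↔ S ≠ E ∧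
      (p = sC S E ∧ (c = sL S E ∨ c = sR S E) ∨ SEdge S (S + sT S E) p c ∨
        SEdge (S + sT S E + 1) (S + 2 * sT S E + 1) p c ∨ SEdge (S + 2 * sT S E + 2) E p c) := by
  constructor
  · rintro (⟨_, _, h⟩ | ⟨_, _, h⟩ | ⟨_, _, _, _, h, h'⟩ | ⟨_, _, _, _, h, h'⟩ |
      ⟨_, _, _, _, h, h'⟩) <;> simp [*]
  · rintro ⟨h, ⟨rfl, rfl | rfl⟩ | h' | h' | h'⟩
    exacts [.cl _ _ h, .cr _ _ h, .recL _ _ _ _ h h', .recC _ _ _ _ h h', .recR _ _ _ _ h h']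

theorem sEdge_tripling_iff {S x h p c : ℕ} (hx : 2 * h + 1 = x) :
    SEdge S (S + 3 * x - 1) p c ↔
      p = S + x + h ∧ (c = S + h ∨ c = S + 2 * x + h) ∨ SEdge S (S + x - 1) p c ∨
        SEdge (S + x) (S + x + x - 1) p c ∨ SEdge (S + 2 * x) (S + 2 * x + x - 1) p c := by
  have hL : sL S (S + 3 * x - 1) = S + h := by unfold sL; omega
  have hT : sT S (S + 3 * x - 1) = x - 1 := by unfold sT; omega
  have hC : sC S (S + 3 * x - 1) = S + x + h := by unfold sC; omega
  have hR : sR S (S + 3 * x - 1) = S + 2 * x + h := by unfold sR; omega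
  rw [sEdge_iff, hL, hT, hC, hR, and_iff_right (by omega : S ≠ S + 3 * x - 1),
    show S + (x - 1) = S + x - 1 by omega, show S + x - 1 + 1 = S + x by omega,
    show S + 2 * (x - 1) + 1 = S + x + x - 1 by omega,
    show S + 2 * (x - 1) + 2 = S + 2 * x by omega,
    show S + 3 * x - 1 = S + 2 * x + x - 1 by omega]

theorem sierpinskiEdge_of_sEdge {t S p c : ℕ} (hS : 3 ^ t ∣ S) (h : SEdge S (S + 3 ^ t - 1) p c) :
    SierpinskiEdge p c := by
  induction t generalizing S with
  | zero => exact absurd rfl (sEdge_iff.1 (by simpa using h)).1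
  | succ t ih =>
    have hx := two_mul_centerOffset_add_one t
    have hS' : 3 ^ t ∣ S := (pow_dvd_pow 3 t.le_succ).trans hS
    have hS3 : 3 ^ (t + 1) = 3 * 3 ^ t := pow_succ' 3 t
    rw [hS3, sEdge_tripling_iff hx] at h
    rcases h with ⟨rfl, hc⟩ | h | h | h
    · have hcS : S ≤ c ∧ c < S + 3 ^ (t + 1) := by omega
      refine ⟨by omega, t, ?_, ?_⟩
      · rcases hc with rfl | rfl
        · exact blockCenter_of_dvd hS' (Nat.le_add_right _ _) (by omega)
        · exact blockCenter_of_dvd (hS'.add (dvd_mul_left _ _)) (Nat.le_add_right _ _) (by omega)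
      · rw [blockCenter_of_dvd hS hcS.1 hcS.2, centerOffset_succ, add_assoc]
    · exact ih hS' h
    · exact ih (hS'.add dvd_rfl) h
    · exact ih (hS'.add (dvd_mul_left _ _)) h

theorem sEdge_blockCenter_succ {t S a c : ℕ} (hS : 3 ^ t ∣ S) (hSc : S ≤ c) (hcS : c < S + 3 ^ t)
    (ha : a < t) (hfix : blockCenter a c = c) (hne : blockCenter (a + 1) c ≠ c) :
    SEdge S (S + 3 ^ t - 1) (blockCenter (a + 1) c) c := by
  induction t generalizing S with
  | zero => omega
  | succ t ih =>
    have hx := two_mul_centerOffset_add_one t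
    have hS' : 3 ^ t ∣ S := (pow_dvd_pow 3 t.le_succ).trans hS
    have hparent : blockCenter (t + 1) c = S + 3 ^ t + centerOffset t := by
      rw [blockCenter_of_dvd hS hSc hcS, centerOffset_succ, add_assoc]
    rw [pow_succ'] at hcS
    rw [pow_succ', sEdge_tripling_iff hx]
    have hthird : c < S + 3 ^ t ∨ S + 3 ^ t ≤ c ∧ c < S + 2 * 3 ^ t ∨ S + 2 * 3 ^ t ≤ c := by
      omega
    rcases Nat.lt_succ_iff_lt_or_eq.1 ha with hat | rfl
    · rcases hthird with h0 | ⟨h1, h1'⟩ | h2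
      · exact Or.inr (Or.inl (ih hS' hSc h0 hat))
      · exact Or.inr (Or.inr (Or.inl (ih (hS'.add dvd_rfl) h1 (by omega) hat)))
      · exact Or.inr (Or.inr (Or.inr (ih (hS'.add (dvd_mul_left _ _)) h2 (by omega) hat)))
    · refine Or.inl ⟨hparent, ?_⟩
      rcases hthird with h0 | ⟨h1, h1'⟩ | h2
      · have := blockCenter_of_dvd hS' hSc h0; omega
      · have := blockCenter_of_dvd (hS'.add dvd_rfl) h1 (by omega); omega
      · have := blockCenter_of_dvd (hS'.add (dvd_mul_left _ _)) h2 (by omega); omega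

theorem genEdge_iff {N p c : ℕ} : genEdge N p c ↔ SierpinskiEdge p c ∧ p < N ∧ c < N := by
  have hN : N ≤ 3 ^ Nat.clog 3 N := Nat.le_pow_clog (by norm_num) N
  constructor
  · rintro ⟨h, hp, hc⟩
    exact ⟨sierpinskiEdge_of_sEdge (dvd_zero _) (by simpa [fullEdge] using h), hp, hc⟩
  · rintro ⟨⟨hne, a, hfix, rfl⟩, hp, hc⟩
    have ha : a < Nat.clog 3 N := by
      by_contra! h
      have := pow_le_blockCenter (show Nat.clog 3 N < a + 1 by omega) c
      omega
    refine ⟨?_, hp, hc⟩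
    have hcK : c < 0 + 3 ^ Nat.clog 3 N := by omega
    simpa [fullEdge] using sEdge_blockCenter_succ (dvd_zero _) (Nat.zero_le c) hcK ha hfix hne

section Forest

variable {N M m i j : ℕ}

theorem genEdge_mono (hNM : N ≤ M) : genEdge N ≤ genEdge M := fun _ _ he => by
  obtain ⟨he, hp, hc⟩ := genEdge_iff.1 he
  exact genEdge_iff.2 ⟨he, hp.trans_le hNM, hc.trans_le hNM⟩

theorem genReaches_mono (hNM : N ≤ M) : genReaches N ≤ genReaches M :=
  Relation.ReflTransGen.mono (genEdge_mono hNM)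

theorem lt_of_genReaches_of_ne (h : genReaches N m i) (hne : m ≠ i) : i < N := by
  rcases Relation.ReflTransGen.cases_tail h with rfl | ⟨_, -, he⟩
  · exact absurd rfl hne
  · exact he.2.2

theorem genReaches_iff (hi : i < N) :
    genReaches N m i ↔ ∃ a, m = blockCenter a i ∧ ∀ b ≤ a, blockCenter b i < N := by
  constructor
  · intro h
    induction h using Relation.ReflTransGen.head_induction_on with
    | refl => exact ⟨0, (blockCenter_zero i).symm, fun b hb => by
        rwa [Nat.le_zero.1 hb, blockCenter_zero]⟩
    | head hedge _ ih =>
      obtain ⟨a, rfl, hlt⟩ := ih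
      obtain ⟨⟨hne, a', hfix, rfl⟩, hmN, -⟩ := genEdge_iff.1 hedge
      have haa' : a ≤ a' := by
        by_contra! h
        exact hne (blockCenter_blockCenter_of_ge (by omega) i)
      rw [blockCenter_blockCenter_of_le haa'] at hfix
      rw [blockCenter_blockCenter_of_le (by omega)] at hmN ⊢
      refine ⟨a' + 1, rfl, fun b hb => ?_⟩
      rcases le_or_gt b a with hba | hab
      · exact hlt b hba
      rcases lt_or_eq_of_le hb with hba' | rfl
      · calc blockCenter b i = blockCenter b (blockCenter a' i) := by
              rw [hfix, blockCenter_blockCenter_of_le hab.le]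
          _ = blockCenter a i := by
              rw [blockCenter_blockCenter_of_ge (Nat.lt_succ_iff.1 hba'), hfix]
          _ < N := hlt a le_rfl
      · exact hmN
  · rintro ⟨a, rfl, hlt⟩
    induction a with
    | zero => rw [blockCenter_zero]; exact Relation.ReflTransGen.refl
    | succ a ih =>
      have hrest := ih fun b hb => hlt b (by omega)
      by_cases he : blockCenter (a + 1) i = blockCenter a i
      · rwa [he]
      have hedge : genEdge N (blockCenter (a + 1) i) (blockCenter a i) :=
        genEdge_iff.2 ⟨⟨he, a, blockCenter_blockCenter_of_ge le_rfl i,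
          blockCenter_blockCenter_of_le (by omega) i⟩, hlt _ le_rfl, hlt a (by omega)⟩
      exact Relation.ReflTransGen.head hedge hrest

theorem genReaches_of_le_of_le (h : genReaches N m i) (hmj : m ≤ j) (hji : j ≤ i) :
    genReaches N m j := by
  rcases eq_or_ne m i with rfl | hne
  · rw [le_antisymm hji hmj]; exact Relation.ReflTransGen.refl
  have hi := lt_of_genReaches_of_ne h hne
  obtain ⟨a, rfl, hlt⟩ := (genReaches_iff hi).1 h
  rw [← blockCenter_eq_of_le_of_le hmj hji]
  exact (genReaches_iff (by omega)).2
    ⟨a, rfl, fun b hb => (blockCenter_mono b hji).trans_lt (hlt b hb)⟩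

theorem genUpd_subset (hNM : N ≤ M) : genUpd N j ⊆ genUpd M j :=
  fun _ => genReaches_mono hNM _ _

theorem genQry_subset (hjN : j < N) (hNM : N ≤ M) :
    genQry N j ⊆ genUpd M j ∪ genQry M j := by
  rintro m ⟨hmN, hdesc, hpar⟩
  by_cases hdescM : ∀ i, genReaches M m i → i ≤ j
  · refine Or.inr ⟨hmN.trans_le hNM, hdescM, fun p hp hdescp => ?_⟩
    have hpj := hdescp p Relation.ReflTransGen.refl
    obtain ⟨hp, -, -⟩ := genEdge_iff.1 hp
    exact hpar p (genEdge_iff.2 ⟨hp, by omega, hmN⟩)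
      fun i hi => hdescp i (genReaches_mono hNM _ _ hi)
  · push Not at hdescM
    obtain ⟨i, hi, hji⟩ := hdescM
    exact Or.inl (genReaches_of_le_of_le hi (hdesc m Relation.ReflTransGen.refl) hji.le)

theorem genUpd_union_genQry_subset_Iio (hjN : j < N) :
    genUpd N j ∪ genQry N j ⊆ Set.Iio N := by
  rintro m (hm | hm)
  · obtain ⟨a, rfl, hlt⟩ := (genReaches_iff hjN).1 hm
    exact hlt a le_rfl
  · exact hm.1

end Forest

/-- Lemma 1: the weight `w_N(j)` is an increasing function of
`N`: if `j < N ≤ M` then `w_N(j) ≤ w_M(j)`. -/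
theorem weight_monotone (j N M : ℕ) (hjN : j < N) (hNM : N ≤ M) :
    weight N j ≤ weight M j := by
  have hjM := hjN.trans_le hNM
  refine Set.ncard_le_ncard ?_ ((Set.finite_Iio M).subset (genUpd_union_genQry_subset_Iio hjM))
  exact Set.union_subset ((genUpd_subset hNM).trans Set.subset_union_left) (genQry_subset hjN hNM)
end
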